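/- For every integer n ≥ 0, the number of n-step half-space walks on the lattice strip ℤ × {−1,0,1,2} satisfies h_{[−1,2],n} ≤ (1 + n + n² + n³) · b_{[−1,2],n}, where b_{[−1,2],n} is the number of n-step bridges on ℤ × {−1,0,1,2} (with h_{[−1,2],0} = b_{[−1,2],0} = 1 by convention). -/

import Mathlib

open Filter Finset

/-- An `n`-step self-avoiding walk on the lattice strip `ℤ × {a,…,b}`:
a sequence of pairwise distinct points starting at the origin, with second
coordinates in `[a,b]`, each consecutive pair at `ℓ¹`-distance `1`. -/
def IsSAW (a b : ℤ) (n : ℕ) (w : Fin (n + 1) → ℤ × ℤ) : Prop :=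
  w 0 = (0, 0) ∧ Function.Injective w ∧
  (∀ i, a ≤ (w i).2 ∧ (w i).2 ≤ b) ∧
  ∀ i : Fin n, |(w i.succ).1 - (w i.castSucc).1| + |(w i.succ).2 - (w i.castSucc).2| = 1

/-- The number `c_{[a,b],n}` of `n`-step SAWs on the strip `ℤ × {a,…,b}`. -/
noncomputable def numSAW (a b : ℤ) (n : ℕ) : ℕ :=
  Nat.card {w : Fin (n + 1) → ℤ × ℤ // IsSAW a b n w}

/-- An `n`-step bridge: a SAW with `x₀ < x_j ≤ x_n` for all `j ≠ 0`. -/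
def IsBridge (a b : ℤ) (n : ℕ) (w : Fin (n + 1) → ℤ × ℤ) : Prop :=
  IsSAW a b n w ∧
  ∀ j : Fin (n + 1), j ≠ 0 → (w 0).1 < (w j).1 ∧ (w j).1 ≤ (w (Fin.last n)).1

/-- The number `b_{[a,b],n}` of `n`-step bridges on the strip `ℤ × {a,…,b}`. -/
noncomputable def numBridge (a b : ℤ) (n : ℕ) : ℕ :=
  Nat.card {w : Fin (n + 1) → ℤ × ℤ // IsBridge a b n w}

/-- An `n`-step half-space walk: a SAW with `x₀ < x_j` for all `j ≠ 0`. -/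
def IsHalfSpace (a b : ℤ) (n : ℕ) (w : Fin (n + 1) → ℤ × ℤ) : Prop :=
  IsSAW a b n w ∧ ∀ j : Fin (n + 1), j ≠ 0 → (w 0).1 < (w j).1

/-- The number `h_{[a,b],n}` of `n`-step half-space walks on `ℤ × {a,…,b}`. -/
noncomputable def numHalfSpace (a b : ℤ) (n : ℕ) : ℕ :=
  Nat.card {w : Fin (n + 1) → ℤ × ℤ // IsHalfSpace a b n w}

/-- The connective constant `μ_{[a,b]} = lim_{n→∞} (c_{[a,b],n})^(1/n)`. -/
noncomputable def connConst (a b : ℤ) : ℝ :=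
  limUnder atTop (fun n : ℕ => (numSAW a b n : ℝ) ^ ((n : ℝ)⁻¹))


/-!
Folding the part of a half-space walk after its last rightmost point about the vertical line
through that point gives again a half-space walk, and the fold is undone by folding again at the
same point. Folding repeatedly, a half-space walk in `ℤ × {a,…,b}` is turned into a bridge; a walk
needing `k` folds is recovered from the bridge and the `k` fold points, each of them `< n`, so
at most `(1 + n + ⋯ + nᵏ) b_n` half-space walks need at most `k` folds. On a strip of height at
most `4` three folds suffice: a walk needing four would cross one vertical line five times, and a
self-avoiding walk crosses a line at most once at each height.
-/

variable {n : ℕ}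

section LastArgmax

variable {ι α : Type*} [Fintype ι] [LinearOrder ι] [Nonempty ι] [LinearOrder α]

def lastArgmax (f : ι → α) : ι :=
  (univ.filter fun i => ∀ k, f k ≤ f i).max' <| by
    obtain ⟨i, -, hi⟩ := exists_max_image univ f univ_nonempty
    exact ⟨i, by simpa using hi⟩

lemma le_apply_lastArgmax (f : ι → α) (i : ι) : f i ≤ f (lastArgmax f) :=
  (mem_filter.1 (max'_mem (univ.filter fun i => ∀ k, f k ≤ f i) _)).2 i

lemma apply_lt_apply_lastArgmax {f : ι → α} {i : ι} (hi : lastArgmax f < i) :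
    f i < f (lastArgmax f) := by
  refine (le_apply_lastArgmax f i).lt_of_not_ge fun h => hi.not_ge (le_max' _ i ?_)
  exact mem_filter.2 ⟨mem_univ i, fun k => (le_apply_lastArgmax f k).trans h⟩

end LastArgmax

def IsLastMaxFrom (f : Fin (n + 1) → ℤ) (j m : Fin (n + 1)) : Prop :=
  j ≤ m ∧ (∀ i, j ≤ i → f i ≤ f m) ∧ ∀ i, m < i → f i < f m

lemma IsLastMaxFrom.mono {f : Fin (n + 1) → ℤ} {j j' m : Fin (n + 1)}
    (h : IsLastMaxFrom f j m) (hj : j ≤ j') (hj' : j' ≤ m) : IsLastMaxFrom f j' m :=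
  ⟨hj', fun i hi => h.2.1 i (hj.trans hi), h.2.2⟩

lemma IsLastMaxFrom.of_eq_add {f g : Fin (n + 1) → ℤ} {j m : Fin (n + 1)} {c : ℤ}
    (h : IsLastMaxFrom f j m) (hg : ∀ i, j ≤ i → g i = c + f i) : IsLastMaxFrom g j m := by
  obtain ⟨hjm, hle, hlt⟩ := h
  refine ⟨hjm, fun i hi => ?_, fun i hi => ?_⟩
  · rw [hg i hi, hg m hjm]
    exact (add_le_add_iff_left c).2 (hle i hi)
  · rw [hg i (hjm.trans hi.le), hg m hjm]
    exact (add_lt_add_iff_left c).2 (hlt i hi)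

lemma isLastMaxFrom_congr {f g : Fin (n + 1) → ℤ} {j m : Fin (n + 1)} (c : ℤ)
    (h : ∀ i, j ≤ i → g i = c + f i) : IsLastMaxFrom g j m ↔ IsLastMaxFrom f j m :=
  ⟨fun hg => hg.of_eq_add (c := -c) fun i hi => by rw [h i hi]; ring, fun hf => hf.of_eq_add h⟩

lemma isLastMaxFrom_lastArgmax (f : Fin (n + 1) → ℤ) : IsLastMaxFrom f 0 (lastArgmax f) :=
  ⟨Fin.zero_le _, fun i _ => le_apply_lastArgmax f i, fun _ => apply_lt_apply_lastArgmax⟩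

lemma Fin.exists_exit_step {p : Fin (n + 1) → Prop} {i j : Fin (n + 1)} (hij : i ≤ j)
    (hi : p i) (hj : ¬ p j) :
    ∃ t : Fin n, i ≤ t.castSucc ∧ t.succ ≤ j ∧ p t.castSucc ∧ ¬ p t.succ := by
  induction j using Fin.induction with
  | zero => exact absurd (le_antisymm hij (Fin.zero_le i) ▸ hi) hj
  | succ j ih =>
    have hi' : i ≤ j.castSucc := Fin.le_castSucc_iff.2 <| hij.lt_of_ne fun h => hj (h ▸ hi)
    by_cases hpj : p j.castSucc
    · exact ⟨j, hi', le_rfl, hpj, hj⟩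
    · obtain ⟨t, hit, htj, ht⟩ := ih hi' hpj
      exact ⟨t, hit, htj.trans Fin.castSucc_lt_succ.le, ht⟩

section Fold

variable {a b : ℤ} {w : Fin (n + 1) → ℤ × ℤ}

def foldAt (w : Fin (n + 1) → ℤ × ℤ) (j : Fin (n + 1)) : Fin (n + 1) → ℤ × ℤ :=
  fun i => if i ≤ j then w i else (2 * (w j).1 - (w i).1, (w i).2)

lemma foldAt_of_le {j i : Fin (n + 1)} (h : i ≤ j) : foldAt w j i = w i := if_pos h

lemma foldAt_of_ge {j i : Fin (n + 1)} (h : j ≤ i) :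
    foldAt w j i = (2 * (w j).1 - (w i).1, (w i).2) := by
  rcases h.lt_or_eq with h | rfl
  · exact if_neg (not_le.2 h)
  · rw [foldAt_of_le le_rfl]
    ext <;> simp only; ring

lemma foldAt_foldAt (w : Fin (n + 1) → ℤ × ℤ) (j : Fin (n + 1)) : foldAt (foldAt w j) j = w := by
  funext i
  rcases le_total i j with h | h
  · rw [foldAt_of_le h, foldAt_of_le h]
  · rw [foldAt_of_ge h, foldAt_of_ge h, foldAt_of_ge le_rfl]
    ext <;> simp only; ring

lemma foldAt_last (w : Fin (n + 1) → ℤ × ℤ) : foldAt w (Fin.last n) = w :=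
  funext fun i => foldAt_of_le (Fin.le_last i)

def lastPeak (w : Fin (n + 1) → ℤ × ℤ) : Fin (n + 1) :=
  lastArgmax fun i => (w i).1

def foldAtPeak (w : Fin (n + 1) → ℤ × ℤ) : Fin (n + 1) → ℤ × ℤ :=
  foldAt w (lastPeak w)

lemma fst_le_fst_lastPeak (w : Fin (n + 1) → ℤ × ℤ) (i : Fin (n + 1)) :
    (w i).1 ≤ (w (lastPeak w)).1 :=
  le_apply_lastArgmax (fun i => (w i).1) i

lemma fst_lt_fst_lastPeak {i : Fin (n + 1)} (hi : lastPeak w < i) :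
    (w i).1 < (w (lastPeak w)).1 :=
  apply_lt_apply_lastArgmax hi

lemma foldAtPeak_of_le {i : Fin (n + 1)} (hi : i ≤ lastPeak w) : foldAtPeak w i = w i :=
  foldAt_of_le hi

lemma fst_foldAtPeak {i : Fin (n + 1)} (hi : lastPeak w ≤ i) :
    (foldAtPeak w i).1 = 2 * (w (lastPeak w)).1 - (w i).1 := by
  rw [foldAtPeak, foldAt_of_ge hi]

lemma foldAt_foldAtPeak (w : Fin (n + 1) → ℤ × ℤ) : foldAt (foldAtPeak w) (lastPeak w) = w :=
  foldAt_foldAt w _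

lemma foldAtPeak_of_lastPeak_eq_last (h : lastPeak w = Fin.last n) : foldAtPeak w = w := by
  rw [foldAtPeak, h, foldAt_last]

lemma isSAW_foldAtPeak (hw : IsSAW a b n w) : IsSAW a b n (foldAtPeak w) := by
  show IsSAW a b n (foldAt w (lastPeak w))
  obtain ⟨h0, hinj, hstrip, hstep⟩ := hw
  set j := lastPeak w
  have hfold : ∀ {i}, j ≤ i → foldAt w j i = (2 * (w j).1 - (w i).1, (w i).2) := foldAt_of_ge
  refine ⟨(foldAt_of_le (Fin.zero_le j)).trans h0, ?_, fun i => ?_, fun t => ?_⟩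
  · have hsep {i i'} (hi : i ≤ j) (hi' : j < i') : foldAt w j i ≠ foldAt w j i' := fun h => by
      have := congrArg Prod.fst h
      rw [foldAt_of_le hi, hfold hi'.le] at this
      linarith [fst_le_fst_lastPeak w i, fst_lt_fst_lastPeak hi']
    intro i i' h
    rcases le_or_gt i j with hi | hi <;> rcases le_or_gt i' j with hi' | hi'
    · rw [foldAt_of_le hi, foldAt_of_le hi'] at h
      exact hinj h
    · exact absurd h (hsep hi hi')
    · exact absurd h.symm (hsep hi' hi)
    · rw [hfold hi.le, hfold hi'.le, Prod.mk.injEq] at h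
      exact hinj (Prod.ext (by linarith [h.1]) h.2)
  · rcases le_total i j with h | h
    · rw [foldAt_of_le h]; exact hstrip i
    · rw [hfold h]; exact hstrip i
  · rcases le_or_gt t.succ j with h | h
    · rw [foldAt_of_le h, foldAt_of_le (Fin.castSucc_lt_succ.le.trans h)]
      exact hstep t
    · rw [hfold h.le, hfold (Fin.le_castSucc_iff.2 h)]
      convert hstep t using 2
      rw [← abs_neg]; congr 1; ring

lemma isHalfSpace_foldAtPeak (hw : IsHalfSpace a b n w) : IsHalfSpace a b n (foldAtPeak w) := by
  refine ⟨isSAW_foldAtPeak hw.1, fun i hi => ?_⟩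
  rw [foldAtPeak_of_le (Fin.zero_le _)]
  rcases le_or_gt i (lastPeak w) with h | h
  · rw [foldAtPeak_of_le h]; exact hw.2 i hi
  · rw [fst_foldAtPeak h.le]
    linarith [fst_le_fst_lastPeak w 0, fst_lt_fst_lastPeak h]

lemma IsHalfSpace.isBridge_of_lastPeak_eq_last (hw : IsHalfSpace a b n w)
    (h : lastPeak w = Fin.last n) : IsBridge a b n w :=
  ⟨hw.1, fun j hj => ⟨hw.2 j hj, h ▸ fst_le_fst_lastPeak w j⟩⟩

lemma lastPeak_ne_last_of_not_isBridge (hw : IsHalfSpace a b n w) (h : ¬ IsBridge a b n w) :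
    lastPeak w ≠ Fin.last n :=
  fun h' => h (hw.isBridge_of_lastPeak_eq_last h')

lemma lastPeak_lt_lastPeak_foldAtPeak (h : lastPeak w < Fin.last n) :
    lastPeak w < lastPeak (foldAtPeak w) := by
  by_contra! hle
  have hpeak := fst_le_fst_lastPeak (foldAtPeak w) (Fin.last n)
  rw [foldAtPeak_of_le hle, fst_foldAtPeak (Fin.le_last _)] at hpeak
  linarith [fst_le_fst_lastPeak w (lastPeak (foldAtPeak w)), fst_lt_fst_lastPeak h]

lemma isLastMaxFrom_foldAtPeak_iff {j m : Fin (n + 1)} (hj : lastPeak w ≤ j) :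
    IsLastMaxFrom (fun i => (foldAtPeak w i).1) j m ↔ IsLastMaxFrom (fun i => -(w i).1) j m :=
  isLastMaxFrom_congr (2 * (w (lastPeak w)).1) fun i hi => by
    rw [fst_foldAtPeak (hj.trans hi)]; ring

lemma isLastMaxFrom_neg_foldAtPeak_iff {j m : Fin (n + 1)} (hj : lastPeak w ≤ j) :
    IsLastMaxFrom (fun i => -(foldAtPeak w i).1) j m ↔ IsLastMaxFrom (fun i => (w i).1) j m :=
  isLastMaxFrom_congr (-2 * (w (lastPeak w)).1) fun i hi => by
    rw [fst_foldAtPeak (hj.trans hi)]; ring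

end Fold

section Crossing

variable {a b : ℤ} {w : Fin (n + 1) → ℤ × ℤ}

/-- Step `t` of `w` crosses the vertical line `x = c + 1/2`. -/
def CrossesAt (w : Fin (n + 1) → ℤ × ℤ) (c : ℤ) (t : Fin n) : Prop :=
  (w t.castSucc).1 ≤ c ∧ c < (w t.succ).1 ∨ c < (w t.castSucc).1 ∧ (w t.succ).1 ≤ c

lemma IsSAW.horizontal_of_crossesAt (hw : IsSAW a b n w) {c : ℤ} {t : Fin n}
    (h : CrossesAt w c t) :
    (w t.succ).2 = (w t.castSucc).2 ∧ ((w t.castSucc).1 = c ∧ (w t.succ).1 = c + 1 ∨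
      (w t.castSucc).1 = c + 1 ∧ (w t.succ).1 = c) := by
  have := hw.2.2.2 t
  simp only [abs_eq_max_neg] at this
  unfold CrossesAt at h
  omega

lemma IsSAW.injOn_crossesAt (hw : IsSAW a b n w) (c : ℤ) :
    Set.InjOn (fun t => (w t.castSucc).2) {t | CrossesAt w c t} := by
  intro t ht t' ht' hy
  obtain ⟨hy₁, hx₁⟩ := hw.horizontal_of_crossesAt ht
  obtain ⟨hy₂, hx₂⟩ := hw.horizontal_of_crossesAt ht'
  simp only at hy
  have hsame : w t.castSucc = w t'.castSucc ∨
      w t.castSucc = w t'.succ ∧ w t.succ = w t'.castSucc := by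
    simp only [Prod.ext_iff]; omega
  rcases hsame with h | ⟨h₁, h₂⟩
  · exact Fin.castSucc_injective _ (hw.2.1 h)
  · have h₁ := congrArg Fin.val (hw.2.1 h₁)
    have h₂ := congrArg Fin.val (hw.2.1 h₂)
    simp only [Fin.val_castSucc, Fin.val_succ] at h₁ h₂
    omega

lemma IsSAW.card_le_of_forall_crossesAt (hw : IsSAW a b n w) {c : ℤ} {s : Finset (Fin n)}
    (hs : ∀ t ∈ s, CrossesAt w c t) : #s ≤ (b + 1 - a).toNat := by
  rw [← Int.card_Icc]
  exact card_le_card_of_injOn _ (fun t _ => mem_Icc.2 (hw.2.2.1 _))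
    ((hw.injOn_crossesAt c).mono hs)

lemma IsHalfSpace.eq_last_of_isLastMaxFrom (hw : IsHalfSpace a b n w) (hab : b ≤ a + 3)
    {m₀ m₁ m₂ m₃ : Fin (n + 1)} (h₀ : IsLastMaxFrom (fun i => (w i).1) 0 m₀)
    (h₁ : IsLastMaxFrom (fun i => -(w i).1) m₀ m₁) (h₂ : IsLastMaxFrom (fun i => (w i).1) m₁ m₂)
    (h₃ : IsLastMaxFrom (fun i => -(w i).1) m₂ m₃) (h₂₃ : m₂ < m₃) : m₃ = Fin.last n := by
  by_contra hlast
  set c := (w m₃).1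
  have hc₀ : (w 0).1 ≤ c := (hw.2 m₃ (Fin.pos_iff_ne_zero.1 ((Fin.zero_le m₂).trans_lt h₂₃))).le
  have hc₃ : c < (w m₂).1 := h₂.2.2 m₃ h₂₃
  have hc₁ : c < (w m₀).1 := hc₃.trans_le (h₀.2.1 m₂ (Fin.zero_le _))
  have hc₂ : (w m₁).1 ≤ c := neg_le_neg_iff.1 (h₁.2.1 m₃ (h₁.1.trans (h₂.1.trans h₂₃.le)))
  have hc₄ : c < (w (Fin.last n)).1 := neg_lt_neg_iff.1 (h₃.2.2 _ (Fin.lt_last_iff_ne_last.2 hlast))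
  -- The walk crosses `x = c + 1/2` between any two consecutive points of `0, m₀, m₁, m₂, m₃, n`,
  -- and five crossings do not fit into four heights.
  obtain ⟨t₁, -, ht₁, ht₁c⟩ :=
    Fin.exists_exit_step (p := fun i => (w i).1 ≤ c) (Fin.zero_le m₀) hc₀ hc₁.not_ge
  obtain ⟨t₂, ht₂, ht₂', ht₂c⟩ :=
    Fin.exists_exit_step (p := fun i => c < (w i).1) h₁.1 hc₁ hc₂.not_gt
  obtain ⟨t₃, ht₃, ht₃', ht₃c⟩ :=
    Fin.exists_exit_step (p := fun i => (w i).1 ≤ c) h₂.1 hc₂ hc₃.not_ge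
  obtain ⟨t₄, ht₄, ht₄', ht₄c⟩ :=
    Fin.exists_exit_step (p := fun i => c < (w i).1) h₂₃.le hc₃ (lt_irrefl c)
  obtain ⟨t₅, ht₅, -, ht₅c⟩ :=
    Fin.exists_exit_step (p := fun i => (w i).1 ≤ c) (Fin.le_last m₃) le_rfl hc₄.not_ge
  let t : Fin 5 → Fin n := ![t₁, t₂, t₃, t₄, t₅]
  have ht : StrictMono t := by
    refine Fin.strictMono_iff_lt_succ.2 fun i => ?_
    fin_cases i <;> simp only [t] <;> rw [← Fin.succ_le_castSucc_iff]
    exacts [ht₁.trans ht₂, ht₂'.trans ht₃, ht₃'.trans ht₄, ht₄'.trans ht₅]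
  have hcross : ∀ s ∈ univ.map ⟨t, ht.injective⟩, CrossesAt w c s := by
    simp only [Finset.mem_map, mem_univ, true_and, Function.Embedding.coeFn_mk, forall_exists_index,
      forall_apply_eq_imp_iff]
    intro i
    fin_cases i
    exacts [.inl ⟨ht₁c.1, not_le.1 ht₁c.2⟩, .inr ⟨ht₂c.1, not_lt.1 ht₂c.2⟩,
      .inl ⟨ht₃c.1, not_le.1 ht₃c.2⟩, .inr ⟨ht₄c.1, not_lt.1 ht₄c.2⟩,
      .inl ⟨ht₅c.1, not_le.1 ht₅c.2⟩]
  have := hw.1.card_le_of_forall_crossesAt hcross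
  simp only [card_map, card_univ, Fintype.card_fin] at this
  omega

theorem IsHalfSpace.isBridge_foldAtPeak_iterate_three (hw : IsHalfSpace a b n w)
    (hab : b ≤ a + 3) : IsBridge a b n (foldAtPeak^[3] w) := by
  set w₁ := foldAtPeak w
  set w₂ := foldAtPeak w₁
  set w₃ := foldAtPeak w₂
  have hw₃ : IsHalfSpace a b n w₃ :=
    isHalfSpace_foldAtPeak <| isHalfSpace_foldAtPeak <| isHalfSpace_foldAtPeak hw
  refine hw₃.isBridge_of_lastPeak_eq_last ?_
  by_contra h₃
  have hstuck {v : Fin (n + 1) → ℤ × ℤ} (h : lastPeak v = Fin.last n) :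
      lastPeak (foldAtPeak v) = Fin.last n := by
    rwa [foldAtPeak_of_lastPeak_eq_last h]
  have h₂ : lastPeak w₂ ≠ Fin.last n := fun h => h₃ (hstuck h)
  have h₁ : lastPeak w₁ ≠ Fin.last n := fun h => h₂ (hstuck h)
  have h₀ : lastPeak w ≠ Fin.last n := fun h => h₁ (hstuck h)
  have lt₀ := lastPeak_lt_lastPeak_foldAtPeak (Fin.lt_last_iff_ne_last.2 h₀)
  have lt₁ := lastPeak_lt_lastPeak_foldAtPeak (Fin.lt_last_iff_ne_last.2 h₁)
  have lt₂ := lastPeak_lt_lastPeak_foldAtPeak (Fin.lt_last_iff_ne_last.2 h₂)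
  refine h₃ (hw.eq_last_of_isLastMaxFrom hab (m₁ := lastPeak w₁) (isLastMaxFrom_lastArgmax _)
    ?_ ?_ ?_ lt₂)
  · exact (isLastMaxFrom_foldAtPeak_iff le_rfl).1
      ((isLastMaxFrom_lastArgmax _).mono (Fin.zero_le _) lt₀.le)
  · exact (isLastMaxFrom_neg_foldAtPeak_iff lt₀.le).1 <| (isLastMaxFrom_foldAtPeak_iff le_rfl).1
      ((isLastMaxFrom_lastArgmax _).mono (Fin.zero_le _) lt₁.le)
  · exact (isLastMaxFrom_foldAtPeak_iff (lt₀.trans lt₁).le).1 <|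
      (isLastMaxFrom_neg_foldAtPeak_iff lt₁.le).1 <| (isLastMaxFrom_foldAtPeak_iff le_rfl).1
      ((isLastMaxFrom_lastArgmax _).mono (Fin.zero_le _) lt₂.le)

end Crossing

section Counting

variable {a b : ℤ} {w : Fin (n + 1) → ℤ × ℤ}

lemma IsSAW.abs_fst_le (hw : IsSAW a b n w) (i : Fin (n + 1)) : |(w i).1| ≤ i := by
  induction i using Fin.induction with
  | zero => simp [hw.1]
  | succ i ih =>
    have := hw.2.2.2 i
    simp only [Fin.val_succ, Fin.val_castSucc, abs_eq_max_neg] at this ih ⊢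
    push_cast
    omega

lemma finite_of_forall_isSAW {P : (Fin (n + 1) → ℤ × ℤ) → Prop}
    (hP : ∀ w, P w → IsSAW a b n w) : Finite {w // P w} := by
  refine Set.Finite.to_subtype (s := {w | P w}) <|
    (Set.Finite.pi fun _ => Set.finite_Icc ((-n : ℤ), a) ((n : ℤ), b)).subset fun w hw i _ => ?_
  have hx := (hP w hw).abs_fst_le i
  have hi : (i : ℤ) ≤ n := by exact_mod_cast Fin.is_le i
  have hy := (hP w hw).2.2.1 i
  simp only [Set.mem_Icc, Prod.le_def, abs_le] at hx ⊢
  omega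

lemma card_isBridge_foldAtPeak_iterate_succ_le (a b : ℤ) (n k : ℕ) :
    Nat.card {w // IsHalfSpace a b n w ∧ IsBridge a b n (foldAtPeak^[k + 1] w)} ≤
      numBridge a b n +
        n * Nat.card {w // IsHalfSpace a b n w ∧ IsBridge a b n (foldAtPeak^[k] w)} := by
  classical
  have := finite_of_forall_isSAW (P := IsBridge a b n) fun _ h => h.1
  have := finite_of_forall_isSAW
    (P := fun w => IsHalfSpace a b n w ∧ IsBridge a b n (foldAtPeak^[k] w)) fun _ h => h.1.1
  let φ (w : {w // IsHalfSpace a b n w ∧ IsBridge a b n (foldAtPeak^[k + 1] w)}) :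
      {w // IsBridge a b n w} ⊕
        Fin n × {w // IsHalfSpace a b n w ∧ IsBridge a b n (foldAtPeak^[k] w)} :=
    if h : IsBridge a b n w.1 then .inl ⟨w.1, h⟩
    else .inr ((lastPeak w.1).castPred (lastPeak_ne_last_of_not_isBridge w.2.1 h),
      ⟨foldAtPeak w.1, isHalfSpace_foldAtPeak w.2.1, w.2.2⟩)
  have hφ : Function.Injective φ := by
    rintro ⟨v, hv⟩ ⟨v', hv'⟩ h
    simp only [φ] at h
    split_ifs at h
    · simp only [Sum.inl.injEq, Subtype.mk.injEq] at h
      exact Subtype.ext h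
    · simp only [Sum.inr.injEq, Prod.mk.injEq, Fin.castPred_inj, Subtype.mk.injEq] at h
      refine Subtype.ext (show v = v' from ?_)
      rw [← foldAt_foldAtPeak v, ← foldAt_foldAtPeak v', h.1, h.2]
  calc _ ≤ Nat.card (_ ⊕ _) := Nat.card_le_card_of_injective φ hφ
    _ = _ := by rw [Nat.card_sum, Nat.card_prod, Nat.card_fin]; rfl

theorem card_isBridge_foldAtPeak_iterate_le (a b : ℤ) (n k : ℕ) :
    Nat.card {w // IsHalfSpace a b n w ∧ IsBridge a b n (foldAtPeak^[k] w)} ≤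
      (∑ i ∈ range (k + 1), n ^ i) * numBridge a b n := by
  induction k with
  | zero =>
    have := finite_of_forall_isSAW (P := IsBridge a b n) fun _ h => h.1
    rw [zero_add, sum_range_one, pow_zero, one_mul]
    exact Nat.card_le_card_of_injective
      (fun w : {w // IsHalfSpace a b n w ∧ IsBridge a b n w} =>
        (⟨w.1, w.2.2⟩ : {w // IsBridge a b n w}))
      fun v v' h => Subtype.ext (Subtype.mk.inj h)
  | succ k ih =>
    calc _ ≤ numBridge a b n + n * ((∑ i ∈ range (k + 1), n ^ i) * numBridge a b n) :=
          (card_isBridge_foldAtPeak_iterate_succ_le a b n k).trans (by gcongr)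
      _ = _ := by rw [geom_sum_succ (n := k + 1)]; ring

end Counting

/-- For all `n ≥ 0`, `h_{[−1,2],n} ≤ (1 + n + n² + n³) · b_{[−1,2],n}`. -/
theorem stmt_9 (n : ℕ) :
    numHalfSpace (-1) 2 n ≤ (1 + n + n ^ 2 + n ^ 3) * numBridge (-1) 2 n := by
  have hfold : numHalfSpace (-1) 2 n =
      Nat.card {w // IsHalfSpace (-1) 2 n w ∧ IsBridge (-1) 2 n (foldAtPeak^[3] w)} :=
    Nat.card_congr <| Equiv.subtypeEquivRight (p := IsHalfSpace (-1) 2 n) fun w =>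
      ⟨fun hw => ⟨hw, hw.isBridge_foldAtPeak_iterate_three (by norm_num)⟩, And.left⟩
  calc numHalfSpace (-1) 2 n ≤ (∑ i ∈ range 4, n ^ i) * numBridge (-1) 2 n :=
        hfold ▸ card_isBridge_foldAtPeak_iterate_le (-1) 2 n 3
    _ = (1 + n + n ^ 2 + n ^ 3) * numBridge (-1) 2 n := by simp [sum_range_succ]
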